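/- arXiv:1201.2210 — 4 statements merged into one kernel-verified Lean document; each statement's English description precedes it below -/
import Mathlib

section
/- Let E = [0,1]² ⊂ ℝ² and let E⁻ = {-z : z ∈ E}. For z = (x,0) with 0 < x < 1/2, define Θ(x) = ∫_{(E ∪ E⁻) ∩ {|ξ| > x}} ξ₁ξ₂/(ξ₁²+ξ₂²)² dξ. Then Θ(x) = -log x + O(1) as x → 0⁺, i.e., there exists a constant C such that |Θ(x) + log x| ≤ C for all 0 < x < 1/2. -/
open MeasureTheory Real Set

noncomputable def fI : ℝ × ℝ → ℝ := fun ξ => ξ.1 * ξ.2 / (ξ.1 ^ 2 + ξ.2 ^ 2) ^ 2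

def Sq : Set (ℝ × ℝ) := Set.Icc ((0:ℝ), (0:ℝ)) (1, 1) ∪ (fun z : ℝ × ℝ => -z) '' Set.Icc ((0:ℝ), (0:ℝ)) (1, 1)

def SS (x : ℝ) : Set (ℝ × ℝ) := {ξ | ξ ∈ Sq ∧ x < Real.sqrt (ξ.1 ^ 2 + ξ.2 ^ 2)}

def AA (x : ℝ) : Set (ℝ × ℝ) := {ξ | ξ ∈ Sq ∧ x < Real.sqrt (ξ.1 ^ 2 + ξ.2 ^ 2) ∧ Real.sqrt (ξ.1 ^ 2 + ξ.2 ^ 2) ≤ 1/2}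

lemma measurable_Sq : MeasurableSet Sq := by
  apply (measurableSet_Icc).union
  have : (fun z : ℝ × ℝ => -z) '' Set.Icc ((0:ℝ), (0:ℝ)) (1, 1) = Set.Icc (-(1,1)) (-((0:ℝ),(0:ℝ))) := by
    rw [show (fun z : ℝ × ℝ => -z) = Neg.neg from rfl, Set.image_neg_eq_neg, Set.neg_Icc]
  rw [this]; exact measurableSet_Icc

lemma cont_sqrt : Continuous (fun ξ : ℝ × ℝ => Real.sqrt (ξ.1 ^ 2 + ξ.2 ^ 2)) := by
  fun_prop

lemma measurable_SS (x : ℝ) : MeasurableSet (SS x) := by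
  exact measurable_Sq.inter (measurableSet_lt measurable_const cont_sqrt.measurable)

lemma measurable_AA (x : ℝ) : MeasurableSet (AA x) := by
  have : AA x = SS x ∩ {ξ : ℝ × ℝ | Real.sqrt (ξ.1 ^ 2 + ξ.2 ^ 2) ≤ 1/2} := by
    ext ξ; simp only [AA, SS, Set.mem_setOf_eq, Set.mem_inter_iff]; tauto
  rw [this]
  exact (measurable_SS x).inter (measurableSet_le cont_sqrt.measurable measurable_const)

lemma meas_f : Measurable fI := by unfold fI; fun_prop

lemma Sq_subset : Sq ⊆ Set.Icc (-(1,1)) ((1:ℝ),(1:ℝ)) := by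
  intro ξ hξ
  rcases hξ with h | ⟨z, hz, rfl⟩
  · constructor
    · exact le_trans (by constructor <;> norm_num) h.1
    · exact h.2
  · constructor
    · exact neg_le_neg hz.2
    · exact le_trans (neg_le_neg hz.1) (by constructor <;> norm_num)

lemma integrableOn_SS {x : ℝ} (hx : 0 < x) : IntegrableOn fI (SS x) := by
  have hmeas := measurable_SS x
  have hfin : volume (SS x) < ⊤ := by
    refine lt_of_le_of_lt (measure_mono (fun ξ hξ => Sq_subset hξ.1)) ?_
    exact IsCompact.measure_lt_top isCompact_Icc
  refine Measure.integrableOn_of_bounded (M := x⁻¹ ^ 2) hfin.ne meas_f.aestronglyMeasurable ?_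
  · filter_upwards [ae_restrict_mem hmeas] with ξ hξ
    have hr : x < Real.sqrt (ξ.1 ^ 2 + ξ.2 ^ 2) := hξ.2
    have hx2 : x ^ 2 < ξ.1 ^ 2 + ξ.2 ^ 2 := by
      have := Real.sq_sqrt (by positivity : (0:ℝ) ≤ ξ.1 ^ 2 + ξ.2 ^ 2)
      nlinarith [Real.sqrt_nonneg (ξ.1 ^ 2 + ξ.2 ^ 2)]
    have hpos : (0:ℝ) < ξ.1 ^ 2 + ξ.2 ^ 2 := lt_of_le_of_lt (by positivity) hx2
    show |fI ξ| ≤ x⁻¹ ^ 2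
    rw [show fI ξ = ξ.1 * ξ.2 / (ξ.1 ^ 2 + ξ.2 ^ 2) ^ 2 from rfl, abs_div]
    have h1 : |ξ.1 * ξ.2| ≤ ξ.1 ^ 2 + ξ.2 ^ 2 := by
      rw [abs_mul]; nlinarith [abs_nonneg ξ.1, abs_nonneg ξ.2, sq_abs ξ.1, sq_abs ξ.2,
        sq_nonneg (|ξ.1| - |ξ.2|)]
    have h2 : |((ξ.1 ^ 2 + ξ.2 ^ 2) ^ 2)| = (ξ.1 ^ 2 + ξ.2 ^ 2) ^ 2 := abs_of_pos (by positivity)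
    rw [h2]
    rw [div_le_iff₀ (by positivity)]
    calc |ξ.1 * ξ.2| ≤ ξ.1 ^ 2 + ξ.2 ^ 2 := h1
      _ ≤ x⁻¹ ^ 2 * (ξ.1 ^ 2 + ξ.2 ^ 2) ^ 2 := by
          rw [show x⁻¹ ^ 2 * (ξ.1 ^ 2 + ξ.2 ^ 2) ^ 2 = (ξ.1 ^ 2 + ξ.2 ^ 2) * ((ξ.1^2+ξ.2^2) / x^2) by field_simp]
          exact le_mul_of_one_le_right hpos.le ((one_le_div (by positivity)).2 hx2.le)

lemma polar_symm_apply (p : ℝ × ℝ) : polarCoord.symm p = (p.1 * Real.cos p.2, p.1 * Real.sin p.2) := rfl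

lemma polar_target : polarCoord.target = Set.Ioi (0:ℝ) ×ˢ Set.Ioo (-π) π := rfl

lemma AA_polar_iff {x : ℝ} (hx : 0 < x) {p : ℝ × ℝ} (hp : p ∈ polarCoord.target) :
    polarCoord.symm p ∈ AA x ↔
      p ∈ Set.Ioc x (1/2) ×ˢ (Set.Icc 0 (π/2) ∪ Set.Ioc (-π) (-π/2)) := by
  obtain ⟨r, θ⟩ := p
  rw [polar_target] at hp
  obtain ⟨hr, hθ1, hθ2⟩ : 0 < r ∧ -π < θ ∧ θ < π := ⟨hp.1, hp.2.1, hp.2.2⟩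
  have hs : (r * Real.cos θ) ^ 2 + (r * Real.sin θ) ^ 2 = r ^ 2 := by
    have := Real.sin_sq_add_cos_sq θ; nlinarith
  have hsqrt : Real.sqrt ((r * Real.cos θ) ^ 2 + (r * Real.sin θ) ^ 2) = r := by
    rw [hs, Real.sqrt_sq hr.le]
  constructor
  · rintro ⟨hSq, hxr, hr2⟩
    simp only [polar_symm_apply] at hxr hr2
    rw [hsqrt] at hxr hr2
    refine ⟨⟨hxr, hr2⟩, ?_⟩
    rcases hSq with hE | hE
    · obtain ⟨⟨h1, h2⟩, h3, h4⟩ := hE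
      simp only [polar_symm_apply] at h1 h2
      have hc : 0 ≤ Real.cos θ := nonneg_of_mul_nonneg_right h1 hr
      have hsn : 0 ≤ Real.sin θ := nonneg_of_mul_nonneg_right h2 hr
      left
      constructor
      · by_contra h
        push_neg at h
        exact absurd hsn (not_le.2 (Real.sin_neg_of_neg_of_neg_pi_lt h hθ1))
      · by_contra h
        push_neg at h
        exact absurd hc (not_le.2 (Real.cos_neg_of_pi_div_two_lt_of_lt h (by linarith [Real.pi_pos])))
    · rw [polar_symm_apply, show (fun z : ℝ × ℝ => -z) = Neg.neg from rfl,
        Set.image_neg_eq_neg, Set.mem_neg] at hE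
      obtain ⟨⟨h1, h2⟩, h3, h4⟩ := hE
      simp only [Prod.fst_neg, Prod.snd_neg] at h1 h2
      have hc : Real.cos θ ≤ 0 := by nlinarith
      have hsn : Real.sin θ ≤ 0 := by nlinarith
      right
      have hθ0 : θ ≤ 0 := by
        by_contra h
        push_neg at h
        exact absurd hsn (not_le.2 (Real.sin_pos_of_pos_of_lt_pi h hθ2))
      refine ⟨hθ1, ?_⟩
      by_contra h
      push_neg at h
      dsimp only at h
      exact absurd hc (not_le.2 (Real.cos_pos_of_mem_Ioo ⟨by linarith, by linarith [Real.pi_pos]⟩))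
  · rintro ⟨⟨hxr, hr2⟩, hang⟩
    dsimp only at hxr hr2 hang
    have hr1 : r ≤ 1 := by linarith
    refine ⟨?_, ?_, ?_⟩
    · rcases hang with ⟨ha, hb⟩ | ⟨ha, hb⟩
      · left
        have hc : 0 ≤ Real.cos θ := Real.cos_nonneg_of_mem_Icc ⟨by linarith [Real.pi_pos], hb⟩
        have hsn : 0 ≤ Real.sin θ := Real.sin_nonneg_of_nonneg_of_le_pi ha (by linarith [Real.pi_pos])
        rw [polar_symm_apply]
        refine ⟨⟨mul_nonneg hr.le hc, mul_nonneg hr.le hsn⟩, ?_, ?_⟩ <;>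
          · dsimp only
            nlinarith [Real.cos_le_one θ, Real.sin_le_one θ]
      · right
        have hc : Real.cos θ ≤ 0 := by
          rw [← Real.cos_neg]
          exact Real.cos_nonpos_of_pi_div_two_le_of_le (by linarith) (by linarith [Real.pi_pos])
        have hsn : Real.sin θ ≤ 0 := by
          rw [← neg_neg θ, Real.sin_neg, neg_nonpos]
          exact Real.sin_nonneg_of_nonneg_of_le_pi (by linarith) (by linarith)
        rw [polar_symm_apply, show (fun z : ℝ × ℝ => -z) = Neg.neg from rfl,
          Set.image_neg_eq_neg, Set.mem_neg]
        refine ⟨⟨?_, ?_⟩, ?_, ?_⟩ <;>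
          simp only [Prod.fst_neg, Prod.snd_neg] <;>
            nlinarith [Real.neg_one_le_cos θ, Real.neg_one_le_sin θ]
    · rw [polar_symm_apply]; rw [show ((r * Real.cos θ, r * Real.sin θ) : ℝ × ℝ).1 = r * Real.cos θ from rfl]
      rw [show ((r * Real.cos θ, r * Real.sin θ) : ℝ × ℝ).2 = r * Real.sin θ from rfl, hsqrt]
      exact hxr
    · rw [polar_symm_apply]; rw [show ((r * Real.cos θ, r * Real.sin θ) : ℝ × ℝ).1 = r * Real.cos θ from rfl]
      rw [show ((r * Real.cos θ, r * Real.sin θ) : ℝ × ℝ).2 = r * Real.sin θ from rfl, hsqrt]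
      exact hr2

lemma integral_AA {x : ℝ} (hx : 0 < x) (hx2 : x < 1/2) :
    ∫ ξ in AA x, fI ξ = Real.log ((1/2) / x) := by
  set T : Set (ℝ × ℝ) := Set.Ioc x (1/2) ×ˢ (Set.Icc 0 (π/2) ∪ Set.Ioc (-π) (-π/2)) with hT
  set g : ℝ × ℝ → ℝ := fun p => p.1⁻¹ * (Real.cos p.2 * Real.sin p.2) with hg
  have hTmeas : MeasurableSet T :=
    measurableSet_Ioc.prod (measurableSet_Icc.union measurableSet_Ioc)
  have hTsub : T ⊆ polarCoord.target := by
    rw [polar_target]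
    refine Set.prod_mono ?_ ?_
    · exact fun r hr => lt_trans hx hr.1
    · rintro θ (⟨h1, h2⟩ | ⟨h1, h2⟩)
      · exact ⟨by linarith [Real.pi_pos], by linarith [Real.pi_pos]⟩
      · exact ⟨h1, by linarith [Real.pi_pos]⟩
  have key : ∀ p ∈ polarCoord.target,
      p.1 • (AA x).indicator fI (polarCoord.symm p) = T.indicator g p := by
    intro p hp
    by_cases hmem : p ∈ T
    · have hA : polarCoord.symm p ∈ AA x := (AA_polar_iff hx hp).2 hmem
      rw [Set.indicator_of_mem hA, Set.indicator_of_mem hmem]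
      have hr : 0 < p.1 := by rw [polar_target] at hp; exact hp.1
      have hs := Real.sin_sq_add_cos_sq p.2
      rw [polar_symm_apply, smul_eq_mul, hg]
      show p.1 * ((p.1 * Real.cos p.2) * (p.1 * Real.sin p.2) /
        ((p.1 * Real.cos p.2) ^ 2 + (p.1 * Real.sin p.2) ^ 2) ^ 2) = _
      have h4 : (p.1 * Real.cos p.2) ^ 2 + (p.1 * Real.sin p.2) ^ 2 = p.1 ^ 2 := by nlinarith
      rw [h4]
      field_simp
    · have hA : polarCoord.symm p ∉ AA x := fun h => hmem ((AA_polar_iff hx hp).1 h)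
      rw [Set.indicator_of_notMem hA, Set.indicator_of_notMem hmem, smul_zero]
  calc ∫ ξ in AA x, fI ξ = ∫ ξ, (AA x).indicator fI ξ := (integral_indicator (measurable_AA x)).symm
    _ = ∫ p in polarCoord.target, p.1 • (AA x).indicator fI (polarCoord.symm p) :=
        (integral_comp_polarCoord_symm _).symm
    _ = ∫ p in polarCoord.target, T.indicator g p :=
        setIntegral_congr_fun polarCoord.open_target.measurableSet key
    _ = ∫ p in polarCoord.target ∩ T, g p := setIntegral_indicator hTmeas
    _ = ∫ p in T, g p := by rw [Set.inter_eq_self_of_subset_right hTsub]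
    _ = (∫ r in Set.Ioc x (1/2), r⁻¹) *
        (∫ θ in Set.Icc 0 (π/2) ∪ Set.Ioc (-π) (-π/2), Real.cos θ * Real.sin θ) := by
        rw [hT, MeasureTheory.Measure.volume_eq_prod ℝ ℝ]
        exact setIntegral_prod_mul (fun r : ℝ => r⁻¹) (fun θ => Real.cos θ * Real.sin θ) _ _
    _ = Real.log ((1/2)/x) * 1 := by
        congr 1
        · rw [← intervalIntegral.integral_of_le (by linarith)]
          exact integral_inv_of_pos hx (by norm_num)
        · have hdisj : Disjoint (Set.Icc (0:ℝ) (π/2)) (Set.Ioc (-π) (-π/2)) := by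
            rw [Set.disjoint_left]
            rintro θ ⟨h1, _⟩ ⟨_, h2⟩
            linarith [Real.pi_pos]
          have hcont : Continuous (fun θ : ℝ => Real.cos θ * Real.sin θ) :=
            Real.continuous_cos.mul Real.continuous_sin
          rw [setIntegral_union hdisj measurableSet_Ioc
            (hcont.integrableOn_Icc) (hcont.integrableOn_Ioc)]
          have e1 : ∫ θ in Set.Icc (0:ℝ) (π/2), Real.cos θ * Real.sin θ = 1/2 := by
            rw [integral_Icc_eq_integral_Ioc,
              ← intervalIntegral.integral_of_le (by positivity : (0:ℝ) ≤ π/2),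
              intervalIntegral.integral_congr (g := fun θ => Real.sin θ * Real.cos θ)
                (fun θ _ => mul_comm _ _), integral_sin_mul_cos₁]
            simp
          have e2 : ∫ θ in Set.Ioc (-π) (-(π/2)), Real.cos θ * Real.sin θ = 1/2 := by
            rw [← intervalIntegral.integral_of_le (by linarith [Real.pi_pos] : -π ≤ -(π/2)),
              intervalIntegral.integral_congr (g := fun θ => Real.sin θ * Real.cos θ)
                (fun θ _ => mul_comm _ _), integral_sin_mul_cos₁]
            simp [Real.sin_neg, Real.sin_pi_div_two, Real.sin_pi]
          rw [e1]
          rw [show Set.Ioc (-π) (-π/2) = Set.Ioc (-π) (-(π/2)) by rw [neg_div], e2]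
          norm_num
    _ = Real.log ((1/2)/x) := mul_one _

theorem stmt_5 :
    ∃ C : ℝ, ∀ x : ℝ, 0 < x → x < 1 / 2 →
      |(∫ ξ in {ξ : ℝ × ℝ |
          (ξ ∈ Set.Icc ((0:ℝ), (0:ℝ)) (1, 1) ∪ (fun z : ℝ × ℝ => -z) '' Set.Icc ((0:ℝ), (0:ℝ)) (1, 1))
          ∧ x < Real.sqrt (ξ.1 ^ 2 + ξ.2 ^ 2)},
          ξ.1 * ξ.2 / (ξ.1 ^ 2 + ξ.2 ^ 2) ^ 2) + Real.log x| ≤ C := by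
  refine ⟨|(∫ ξ in SS (1/2), fI ξ) + Real.log (1/2)|, fun x hx hx2 => ?_⟩
  show |(∫ ξ in SS x, fI ξ) + Real.log x| ≤ _
  have hsplit : SS x = AA x ∪ SS (1/2) := by
    ext ξ
    simp only [SS, AA, Set.mem_setOf_eq, Set.mem_union]
    constructor
    · rintro ⟨hSq, hxr⟩
      by_cases h : Real.sqrt (ξ.1 ^ 2 + ξ.2 ^ 2) ≤ 1/2
      · exact Or.inl ⟨hSq, hxr, h⟩
      · exact Or.inr ⟨hSq, not_le.1 h⟩
    · rintro (⟨hSq, hxr, _⟩ | ⟨hSq, hr⟩)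
      · exact ⟨hSq, hxr⟩
      · exact ⟨hSq, lt_trans hx2 hr⟩
  have hdisj : Disjoint (AA x) (SS (1/2)) := by
    rw [Set.disjoint_left]
    rintro ξ ⟨_, _, h1⟩ ⟨_, h2⟩
    linarith
  have hAsub : AA x ⊆ SS x := fun ξ ⟨h1, h2, _⟩ => ⟨h1, h2⟩
  have hA : IntegrableOn fI (AA x) := (integrableOn_SS hx).mono_set hAsub
  have hS : IntegrableOn fI (SS (1/2)) := integrableOn_SS (by norm_num)
  rw [hsplit, setIntegral_union hdisj (measurable_SS (1/2)) hA hS, integral_AA hx hx2,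
    Real.log_div (by norm_num) hx.ne']
  exact le_of_eq (by ring_nf)
end

section
/- Let Ω ⊂ ℝ² be a measurable set and let z = (x,0) with 0 < x < 1. Then ∫_{Ω ∩ {|ξ| < 2x}} |( (z-ξ)/|z-ξ|² + ξ/|ξ|² )| dξ ≤ C·x for an absolute constant C. -/
/-!
Each of the two kernel terms has norm `‖·‖⁻¹` at its own singularity, and in dimension `n ≥ 2`
polar coordinates give `∫_{ball c r} ‖x - c‖⁻¹ = n / (n - 1) · |B₁| · r ^ (n - 1)`, i.e. `2πr` in
the plane. The region of integration lies both in the disk of radius `2x` about `0` and in the disk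
of radius `3x` about `z`, so the integral is at most `2π · 3x + 2π · 2x = 10πx`.
-/

open MeasureTheory Metric Set Module

section RadialIntegral

variable {E : Type*} [NormedAddCommGroup E] [NormedSpace ℝ E] [FiniteDimensional ℝ E]
  [MeasurableSpace E] [BorelSpace E] (μ : Measure E) [μ.IsAddHaarMeasure]

theorem integrableOn_norm_inv_ball (hE : 2 ≤ finrank ℝ E) (r : ℝ) :
    IntegrableOn (fun x : E ↦ ‖x‖⁻¹) (ball 0 r) μ := by
  have : Nontrivial E := Module.nontrivial_of_finrank_pos (R := ℝ) (by omega)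
  rw [integrableOn_fun_norm_addHaar μ (f := fun y ↦ y⁻¹)]
  refine (integrableOn_congr_fun (f := fun y : ℝ ↦ y ^ (finrank ℝ E - 2)) (fun y hy ↦ ?_)
    measurableSet_Ioo).mp ?_
  · have hy : y ≠ 0 := hy.1.ne'
    simp only [smul_eq_mul]
    rw [show finrank ℝ E - 1 = finrank ℝ E - 2 + 1 by omega, pow_succ, mul_inv_cancel_right₀ hy]
  · exact (continuous_pow _).integrableOn_Icc.mono_set Ioo_subset_Icc_self

theorem integral_norm_inv_ball (hE : 2 ≤ finrank ℝ E) {r : ℝ} (hr : 0 ≤ r) :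
    ∫ x in ball (0 : E) r, ‖x‖⁻¹ ∂μ =
      finrank ℝ E / (finrank ℝ E - 1) * μ.real (ball 0 1) * r ^ (finrank ℝ E - 1) := by
  have : Nontrivial E := Module.nontrivial_of_finrank_pos (R := ℝ) (by omega)
  obtain ⟨k, hk⟩ : ∃ k, finrank ℝ E = k + 2 := ⟨_, (Nat.sub_add_cancel hE).symm⟩
  have polar := integral_fun_norm_addHaar μ ((Iio r).indicator fun y ↦ y⁻¹)
  have hball (x : E) : (Iio r).indicator (fun y ↦ y⁻¹) ‖x‖ = (ball 0 r).indicator (‖·‖⁻¹) x := by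
    by_cases h : ‖x‖ < r <;> simp [h]
  simp_rw [hball, integral_indicator measurableSet_ball] at polar
  rw [polar, hk]
  have radial : ∫ y in Ioi (0 : ℝ), y ^ (k + 2 - 1) • (Iio r).indicator (fun y ↦ y⁻¹) y
      = r ^ (k + 1) / (k + 1) := by
    calc _ = ∫ y in Ioi (0 : ℝ), (Iio r).indicator (fun y ↦ y ^ k) y := by
          refine setIntegral_congr_fun measurableSet_Ioi fun y (hy : 0 < y) ↦ ?_
          by_cases hyr : y < r
          · simp [hyr, pow_succ, hy.ne']
          · simp [hyr]
      _ = ∫ y in (0 : ℝ)..r, y ^ k := by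
          rw [integral_indicator measurableSet_Iio, Measure.restrict_restrict measurableSet_Iio,
            intervalIntegral.integral_of_le hr, integral_Ioc_eq_integral_Ioo, Iio_inter_Ioi]
      _ = _ := by simp [integral_pow]
  rw [radial]
  push_cast
  field_simp
  ring

theorem integrableOn_norm_sub_inv_ball (hE : 2 ≤ finrank ℝ E) (c : E) (r : ℝ) :
    IntegrableOn (fun x : E ↦ ‖x - c‖⁻¹) (ball c r) μ := by
  have hpre : (· - c) ⁻¹' ball (0 : E) r = ball c r := by ext; simp [dist_eq_norm]
  rw [← hpre]
  exact ((measurePreserving_sub_right μ c).integrableOn_comp_preimage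
    (measurableEmbedding_subRight c)).mpr (integrableOn_norm_inv_ball μ hE r)

theorem integral_norm_sub_inv_ball (hE : 2 ≤ finrank ℝ E) (c : E) {r : ℝ} (hr : 0 ≤ r) :
    ∫ x in ball c r, ‖x - c‖⁻¹ ∂μ =
      finrank ℝ E / (finrank ℝ E - 1) * μ.real (ball 0 1) * r ^ (finrank ℝ E - 1) := by
  have hpre : (· - c) ⁻¹' ball (0 : E) r = ball c r := by ext; simp [dist_eq_norm]
  rw [← hpre, (measurePreserving_sub_right μ c).setIntegral_preimage_emb
    (measurableEmbedding_subRight c) (‖·‖⁻¹), integral_norm_inv_ball μ hE hr]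

end RadialIntegral

theorem norm_inv_sq_norm_smul {F : Type*} [NormedAddCommGroup F] [NormedSpace ℝ F] (v : F) :
    ‖(‖v‖ ^ 2)⁻¹ • v‖ = ‖v‖⁻¹ := by
  rw [norm_smul, norm_inv, norm_pow, norm_norm]
  rcases eq_or_ne ‖v‖ 0 with h | h
  · simp [h]
  · field_simp

local notation "ℝ²" => EuclideanSpace ℝ (Fin 2)

open Real in
theorem integral_norm_inv_sq_smul_add_le (z : ℝ²) {s : Set ℝ²} (hs : s ⊆ ball 0 (2 * ‖z‖)) :
    ∫ ξ in s, ‖(‖z - ξ‖ ^ 2)⁻¹ • (z - ξ) + (‖ξ‖ ^ 2)⁻¹ • ξ‖ ≤ 10 * π * ‖z‖ := by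
  have hdim : 2 ≤ finrank ℝ ℝ² := by simp
  have hs' : s ⊆ ball z (3 * ‖z‖) := fun ξ hξ ↦ by
    have := mem_ball_zero_iff.mp (hs hξ)
    rw [mem_ball, dist_eq_norm]
    linarith [norm_sub_le ξ z]
  have hint₁ := (integrableOn_norm_sub_inv_ball volume hdim z (3 * ‖z‖)).mono_set hs'
  have hint₂ := (integrableOn_norm_inv_ball volume hdim (2 * ‖z‖)).mono_set hs
  have hpt (ξ : ℝ²) :
      ‖(‖z - ξ‖ ^ 2)⁻¹ • (z - ξ) + (‖ξ‖ ^ 2)⁻¹ • ξ‖ ≤ ‖ξ - z‖⁻¹ + ‖ξ‖⁻¹ := by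
    grw [norm_add_le, norm_inv_sq_norm_smul, norm_inv_sq_norm_smul, norm_sub_rev]
  calc _ ≤ ∫ ξ in s, (‖ξ - z‖⁻¹ + ‖ξ‖⁻¹) :=
        integral_mono_of_nonneg (.of_forall fun _ ↦ norm_nonneg _) (hint₁.add hint₂)
          (.of_forall hpt)
    _ = (∫ ξ in s, ‖ξ - z‖⁻¹) + ∫ ξ in s, ‖ξ‖⁻¹ := integral_add hint₁ hint₂
    _ ≤ (∫ ξ in ball z (3 * ‖z‖), ‖ξ - z‖⁻¹) + ∫ ξ in ball (0 : ℝ²) (2 * ‖z‖), ‖ξ‖⁻¹ := by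
        gcongr ?_ + ?_ <;> refine setIntegral_mono_set ?_ (.of_forall fun _ ↦ by positivity) ?_
        · exact integrableOn_norm_sub_inv_ball volume hdim z _
        · exact hs'.eventuallyLE
        · exact integrableOn_norm_inv_ball volume hdim _
        · exact hs.eventuallyLE
    _ = 10 * π * ‖z‖ := by
        rw [integral_norm_sub_inv_ball volume hdim z (by positivity),
          integral_norm_inv_ball volume hdim (by positivity)]
        simp only [finrank_euclideanSpace, Fintype.card_fin, Nat.cast_ofNat, Measure.real,
          EuclideanSpace.volume_ball_fin_two, ENNReal.ofReal_one, one_pow, one_mul, pi_nonneg,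
          ENNReal.toReal_ofReal, Nat.add_one_sub_one, pow_one]
        ring

theorem stmt_6 :
    ∃ C : ℝ, ∀ (Ω : Set (EuclideanSpace ℝ (Fin 2))), MeasurableSet Ω →
      ∀ x : ℝ, 0 < x → x < 1 →
        ∀ z : EuclideanSpace ℝ (Fin 2), z = ![x, 0] →
          ∫ ξ in Ω ∩ {ξ | ‖ξ‖ < 2 * x},
              ‖(‖z - ξ‖ ^ 2)⁻¹ • (z - ξ) + (‖ξ‖ ^ 2)⁻¹ • ξ‖ ≤ C * x := by
  refine ⟨10 * Real.pi, fun Ω _ x hx _ z hz ↦ ?_⟩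
  have hnorm : ‖z‖ = x := by
    rw [EuclideanSpace.norm_eq, hz]
    simp [Real.sqrt_sq hx.le]
  rw [← hnorm]
  exact integral_norm_inv_sq_smul_add_le z fun ξ hξ ↦ mem_ball_zero_iff.mpr (hnorm ▸ hξ.2)
end

section
/- Fix ρ > 0. Let T₁(t) be the unique solution of 2e^{T₁} - T₁ = 1 - log 2 + e^{ρt} for large t. Then T₁(t) = ρt - log 2 + e^{-ρt}(1 - 2log 2 + ρt) + O(t² e^{-2ρt}) as t → ∞. -/
lemma mono_aux (m x y : ℝ) (hx : m ≤ x) (hy : m ≤ y) :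
    (2 * Real.exp m - 1) * |x - y| ≤ |(2 * Real.exp x - x) - (2 * Real.exp y - y)| := by
  have key : ∀ a b : ℝ, m ≤ a → m ≤ b → a ≤ b →
      (2 * Real.exp m - 1) * (b - a) ≤ (2 * Real.exp b - b) - (2 * Real.exp a - a) := by
    intro a b ha hb hab
    have h1 : (b - a) + 1 ≤ Real.exp (b - a) := Real.add_one_le_exp _
    have h2 : Real.exp a * Real.exp (b - a) = Real.exp b := by
      rw [← Real.exp_add]; ring_nf
    have h3 : Real.exp m ≤ Real.exp a := Real.exp_le_exp.mpr ha
    have h4 : (0:ℝ) < Real.exp a := Real.exp_pos a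
    nlinarith [mul_le_mul_of_nonneg_left h1 h4.le, mul_le_mul_of_nonneg_right h3 (sub_nonneg.mpr hab)]
  rcases le_total x y with h | h
  · rw [abs_of_nonpos (by linarith : x - y ≤ 0)]
    have := key x y hx hy h
    calc (2 * Real.exp m - 1) * -(x - y) = (2 * Real.exp m - 1) * (y - x) := by ring
      _ ≤ (2 * Real.exp y - y) - (2 * Real.exp x - x) := this
      _ ≤ |(2 * Real.exp y - y) - (2 * Real.exp x - x)| := le_abs_self _
      _ = |(2 * Real.exp x - x) - (2 * Real.exp y - y)| := abs_sub_comm _ _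
  · rw [abs_of_nonneg (by linarith : 0 ≤ x - y)]
    have := key y x hy hx h
    calc (2 * Real.exp m - 1) * (x - y) ≤ (2 * Real.exp x - x) - (2 * Real.exp y - y) := this
      _ ≤ |(2 * Real.exp x - x) - (2 * Real.exp y - y)| := le_abs_self _

set_option maxHeartbeats 2000000 in
theorem stmt_12 (ρ : ℝ) (hρ : 0 < ρ) (T₁ : ℝ → ℝ) (t₀ : ℝ)
    (hT : ∀ t ≥ t₀, 0 ≤ T₁ t ∧
      2 * Real.exp (T₁ t) - T₁ t = 1 - Real.log 2 + Real.exp (ρ * t)) :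
    ∃ C T₀ : ℝ, ∀ t ≥ T₀,
      |T₁ t - (ρ * t - Real.log 2 + Real.exp (-ρ * t) * (1 - 2 * Real.log 2 + ρ * t))|
        ≤ C * t ^ 2 * Real.exp (-2 * ρ * t) := by
  refine ⟨2 * Real.exp 1 * ((1 + ρ)^2 + (1 + ρ)),
    max t₀ (max 1 (max (4 * (ρ + 1) / ρ^2) (2 / ρ))), ?_⟩
  intro t ht
  have ht0 : t ≥ t₀ := le_trans (le_max_left _ _) ht
  have ht1 : (1:ℝ) ≤ t := le_trans (le_trans (le_max_left _ _) (le_max_right _ _)) ht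
  have ht3 : 4 * (ρ + 1) / ρ^2 ≤ t :=
    le_trans (le_trans (le_trans (le_max_left _ _) (le_max_right _ _)) (le_max_right _ _)) ht
  have ht2' : 2 / ρ ≤ t :=
    le_trans (le_trans (le_trans (le_max_right _ _) (le_max_right _ _)) (le_max_right _ _)) ht
  have ht2 : (2:ℝ) ≤ ρ * t := by
    rw [div_le_iff₀ hρ] at ht2'; linarith [ht2']
  obtain ⟨hT0, hEq⟩ := hT t ht0
  set T := T₁ t with hTdef
  set s := Real.exp (ρ * t) with hsdef
  set δ := Real.exp (-ρ * t) * (1 - 2 * Real.log 2 + ρ * t) with hδdef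
  set A := ρ * t - Real.log 2 + δ with hAdef
  have hspos : 0 < s := Real.exp_pos _
  have hl2lt : Real.log 2 < 0.6931471808 := Real.log_two_lt_d9
  have hl2gt : (0.6931471803:ℝ) < Real.log 2 := Real.log_two_gt_d9
  have hegt : (2.7182818283:ℝ) < Real.exp 1 := Real.exp_one_gt_d9
  set e := Real.exp 1 with hedef
  have hepos : (0:ℝ) < e := Real.exp_pos 1
  -- s ≥ exp 2 = e^2 ≥ 2e
  have hs2e : 2 * e ≤ s := by
    have h1 : Real.exp 2 ≤ s := Real.exp_le_exp.mpr ht2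
    have h2 : Real.exp 2 = e * e := by rw [hedef, ← Real.exp_add]; norm_num
    nlinarith
  -- s * exp(-ρt) = 1
  have hinv : s * Real.exp (-ρ * t) = 1 := by
    rw [hsdef, ← Real.exp_add, show ρ * t + -ρ * t = 0 by ring, Real.exp_zero]
  -- (1+ρ)*t ≤ s
  have ht3' : 4 * (ρ + 1) ≤ t * ρ^2 := by
    rw [div_le_iff₀ (by positivity)] at ht3; linarith
  have hst : (1 + ρ) * t ≤ s := by
    have h12 : ρ * t / 2 + 1 ≤ Real.exp (ρ * t / 2) := Real.add_one_le_exp _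
    have hq : (ρ * t / 2 + 1)^2 ≤ s := by
      have : Real.exp (ρ * t / 2) ^ 2 = s := by
        rw [hsdef, sq, ← Real.exp_add]; ring_nf
      nlinarith [Real.exp_pos (ρ * t / 2)]
    nlinarith [mul_le_mul_of_nonneg_right ht3' (by linarith : (0:ℝ) ≤ t)]
  -- |1 - 2 log 2 + ρt| ≤ (1+ρ)t
  have habs : |1 - 2 * Real.log 2 + ρ * t| ≤ (1 + ρ) * t := by
    rw [abs_of_nonneg (by nlinarith)]
    nlinarith
  -- |δ| * s ≤ (1+ρ)t
  have hδs : |δ| * s ≤ (1 + ρ) * t := by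
    have : |δ| = Real.exp (-ρ * t) * |1 - 2 * Real.log 2 + ρ * t| := by
      rw [hδdef, abs_mul, Real.abs_exp]
    rw [this]
    calc Real.exp (-ρ * t) * |1 - 2 * Real.log 2 + ρ * t| * s
        = (s * Real.exp (-ρ * t)) * |1 - 2 * Real.log 2 + ρ * t| := by ring
      _ = |1 - 2 * Real.log 2 + ρ * t| := by rw [hinv]; ring
      _ ≤ (1 + ρ) * t := habs
  have hδ1 : |δ| ≤ 1 := by nlinarith [abs_nonneg δ]
  have hδlow : -1 ≤ δ := by have := abs_le.mp hδ1; linarith [this.1]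
  have hR : |Real.exp δ - 1 - δ| ≤ δ^2 := Real.abs_exp_sub_one_sub_id_le hδ1
  -- exp A = s/2 * exp δ
  have hexpA : Real.exp A = s / 2 * Real.exp δ := by
    rw [hAdef, Real.exp_add, Real.exp_sub, Real.exp_log two_pos, hsdef]
  -- s * δ = 1 - 2 log 2 + ρ t
  have hsδ : s * δ = 1 - 2 * Real.log 2 + ρ * t := by
    rw [hδdef, ← mul_assoc, hinv, one_mul]
  -- g A - target
  have hgA : (2 * Real.exp A - A) - (2 * Real.exp T - T) = s * (Real.exp δ - 1 - δ) - δ := by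
    rw [hexpA, hEq, hAdef]
    linear_combination hsδ
  clear_value T s δ A e
  -- key inequality from mono_aux
  have hkey : (2 * Real.exp (min A T) - 1) * |A - T| ≤ s * δ^2 + |δ| := by
    have h1 := mono_aux (min A T) A T (min_le_left _ _) (min_le_right _ _)
    rw [hgA] at h1
    have h2 : |s * (Real.exp δ - 1 - δ) - δ| ≤ s * δ^2 + |δ| := by
      calc |s * (Real.exp δ - 1 - δ) - δ| ≤ |s * (Real.exp δ - 1 - δ)| + |δ| :=
            abs_sub _ _
        _ = s * |Real.exp δ - 1 - δ| + |δ| := by rw [abs_mul, abs_of_pos hspos]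
        _ ≤ s * δ^2 + |δ| := by nlinarith [mul_le_mul_of_nonneg_left hR hspos.le]
    linarith
  -- lower bound on 2 exp (min A T) - 1
  have hlow : s ≤ 2 * e * (2 * Real.exp (min A T) - 1) := by
    have hTlb : s ≤ 2 * Real.exp T := by nlinarith
    have hAlb : s / e ≤ 2 * Real.exp A := by
      rw [hexpA]
      have : Real.exp (-1:ℝ) ≤ Real.exp δ := Real.exp_le_exp.mpr hδlow
      have hei : e * Real.exp (-1:ℝ) = 1 := by
        rw [hedef, ← Real.exp_add]; norm_num
      have h4 := mul_le_mul_of_nonneg_left this (by positivity : (0:ℝ) ≤ s * e)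
      have h5 : s * (e * Real.exp (-1:ℝ)) = s := by rw [hei, mul_one]
      rw [div_le_iff₀ hepos]
      nlinarith [h4, h5]
    have hmlb : s / e ≤ 2 * Real.exp (min A T) := by
      rcases min_cases A T with ⟨h, _⟩ | ⟨h, _⟩
      · rw [h]; exact hAlb
      · rw [h]
        have : s / e ≤ s := by
          rw [div_le_iff₀ hepos]; nlinarith
        linarith
    rw [div_le_iff₀ hepos] at hmlb
    nlinarith
  set X := |A - T| with hXdef
  have hXnn : 0 ≤ X := abs_nonneg _
  -- s*s*X ≤ 2e(s²δ²+s|δ|) ≤ 2e((1+ρ)²t²+(1+ρ)t) ≤ C t²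
  have k1 : s * s * X ≤ 2 * e * s * (s * δ^2 + |δ|) := by
    have a1 := mul_le_mul_of_nonneg_right hlow (mul_nonneg hspos.le hXnn)
    have a2 := mul_le_mul_of_nonneg_left hkey (by positivity : (0:ℝ) ≤ 2 * e * s)
    nlinarith
  have k2 : 2 * e * s * (s * δ^2 + |δ|) ≤ 2 * e * ((1 + ρ)^2 * t^2 + (1 + ρ) * t) := by
    have b1 : s * δ^2 * s ≤ ((1 + ρ) * t)^2 := by
      have : (|δ| * s)^2 ≤ ((1 + ρ) * t)^2 := by
        apply sq_le_sq' <;> nlinarith [abs_nonneg δ, mul_nonneg (abs_nonneg δ) hspos.le]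
      calc s * δ^2 * s = (|δ| * s)^2 := by rw [mul_pow, sq_abs]; ring
        _ ≤ ((1 + ρ) * t)^2 := this
    nlinarith
  have k3 : 2 * e * ((1 + ρ)^2 * t^2 + (1 + ρ) * t) ≤
      (2 * e * ((1 + ρ)^2 + (1 + ρ))) * t^2 := by
    have htt : t ≤ t^2 := by nlinarith
    have key := mul_le_mul_of_nonneg_left htt
      (le_of_lt (by nlinarith : (0:ℝ) < 2 * e * (1 + ρ)))
    nlinarith [key]
  have kfin : s * s * X ≤ (2 * e * ((1 + ρ)^2 + (1 + ρ))) * t^2 := le_trans k1 (le_trans k2 k3)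
  have hsepos : 0 < Real.exp (-2 * ρ * t) := Real.exp_pos _
  have hse2 : s * s * Real.exp (-2 * ρ * t) = 1 := by
    rw [hsdef, ← Real.exp_add, ← Real.exp_add, show ρ * t + ρ * t + -2 * ρ * t = 0 by ring,
      Real.exp_zero]
  have hgoal : X ≤ (2 * e * ((1 + ρ)^2 + (1 + ρ))) * t^2 * Real.exp (-2 * ρ * t) := by
    have hX : X = s * s * X * Real.exp (-2 * ρ * t) := by linear_combination -X * hse2
    rw [hX]
    exact mul_le_mul_of_nonneg_right kfin hsepos.le
  rw [abs_sub_comm]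
  exact hgoal
end

section
/- Let δ ∈ (0,1) and consider the ODE H'(ξ) = (δH(ξ) + ξ)/(δξ + H(ξ)) for ξ > 0 with H(ξ) > ξ. Then the quantity (H(ξ) - ξ)^{(1+δ)/2} · (H(ξ) + ξ)^{(1-δ)/2} is constant along solutions; equivalently, any positive differentiable H with H > ξ satisfying (H-ξ)^{(1+δ)/2}(H+ξ)^{(1-δ)/2} = C (C > 0 constant) solves the equation δ(ξH' - H) = ξ - H'H. -/
theorem stmt_13 (δ : ℝ) (hδ : δ ∈ Set.Ioo (0:ℝ) 1) (C : ℝ) (hC : 0 < C)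
    (H H' : ℝ → ℝ)
    (hderiv : ∀ ξ > (0:ℝ), HasDerivAt H (H' ξ) ξ)
    (hgt : ∀ ξ > (0:ℝ), ξ < H ξ)
    (hconst : ∀ ξ > (0:ℝ),
      (H ξ - ξ) ^ ((1 + δ) / 2) * (H ξ + ξ) ^ ((1 - δ) / 2) = C) :
    ∀ ξ > (0:ℝ), δ * (ξ * H' ξ - H ξ) = ξ - H' ξ * H ξ := by
  obtain ⟨hδ0, hδ1⟩ := hδ
  intro ξ hξ
  have hu : 0 < H ξ - ξ := by linarith [hgt ξ hξ]
  have hv : 0 < H ξ + ξ := by linarith [hgt ξ hξ]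
  set A : ℝ := (1 + δ) / 2 with hA
  set B : ℝ := (1 - δ) / 2 with hB
  have h1 : HasDerivAt (fun x => H x - x) (H' ξ - 1) ξ :=
    (hderiv ξ hξ).sub (hasDerivAt_id ξ)
  have h2 : HasDerivAt (fun x => H x + x) (H' ξ + 1) ξ :=
    (hderiv ξ hξ).add (hasDerivAt_id ξ)
  have hgd : HasDerivAt (fun x => A * Real.log (H x - x) + B * Real.log (H x + x))
      (A * ((H' ξ - 1) / (H ξ - ξ)) + B * ((H' ξ + 1) / (H ξ + ξ))) ξ :=
    ((h1.log hu.ne').const_mul A).add ((h2.log hv.ne').const_mul B)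
  have heq : (fun x => A * Real.log (H x - x) + B * Real.log (H x + x))
      =ᶠ[nhds ξ] fun _ => Real.log C := by
    filter_upwards [eventually_gt_nhds hξ] with x hx
    have hux : 0 < H x - x := by linarith [hgt x hx]
    have hvx : 0 < H x + x := by linarith [hgt x hx]
    rw [← hconst x hx, Real.log_mul (by positivity) (by positivity),
      Real.log_rpow hux, Real.log_rpow hvx]
  have hzero : A * ((H' ξ - 1) / (H ξ - ξ)) + B * ((H' ξ + 1) / (H ξ + ξ)) = 0 := by
    have hc : HasDerivAt (fun _ : ℝ => Real.log C)
        (A * ((H' ξ - 1) / (H ξ - ξ)) + B * ((H' ξ + 1) / (H ξ + ξ))) ξ :=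
      hgd.congr_of_eventuallyEq heq.symm
    exact hc.unique (hasDerivAt_const ξ _)
  have key : (A * ((H' ξ - 1) / (H ξ - ξ)) + B * ((H' ξ + 1) / (H ξ + ξ)))
      * ((H ξ - ξ) * (H ξ + ξ)) = 0 := by rw [hzero]; ring
  field_simp at key
  rw [hA, hB] at key
  linear_combination key
end
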